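/- arXiv:1409.2360 — 2 statements merged into one kernel-verified Lean document; each statement's English description precedes it below -/
import Mathlib

section
/- Let $p$ be an odd prime, $n \geq 1$, $\psi$ a primitive additive character of $\mathbb{Z}/p^n$, $b, x \in (\mathbb{Z}/p^n)^\times$, and $\alpha \in (\mathbb{Z}/p^n)^6$. Writing $P(b,v) = b(x_1x_4-x_2x_3) - z_1z_2$ and $\langle \alpha, v\rangle$ the standard pairing $\mathrm{tr}(BT) + y_1 t_1 + y_2 t_2$ (with $\alpha = (B,y_1,y_2)$, $v = (T,t_1,t_2)$), one has $\sum_{v \in (\mathbb{Z}/p^n)^6} \psi\big(x P(b,v) + \langle \alpha, v\rangle\big) = p^{3n}\, \psi\big(-x^{-1} P(b^{-1}, \alpha)\big)$. -/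
open Finset

section Aux

variable {p : ℕ} [Fact p.Prime] {n : ℕ} [NeZero (p ^ n)]
  (ψ : AddChar (ZMod (p ^ n)) ℂ) (hψ : ψ ((p : ZMod (p ^ n)) ^ (n - 1)) ≠ 1)

/-- Every nonzero `c : ZMod (p^n)` divides `p^(n-1)`. -/
lemma aux_exists_mul {c : ZMod (p ^ n)} (hc : c ≠ 0) :
    ∃ d : ZMod (p ^ n), c * d = (p : ZMod (p ^ n)) ^ (n - 1) := by
  have hp := Fact.out (p := p.Prime)
  set m := c.val with hm
  have hm0 : m ≠ 0 := by
    simpa [hm, ZMod.val_eq_zero] using hc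
  set k := m.factorization p with hk
  have hdvd : p ^ k ∣ m := Nat.ordProj_dvd m p
  have hnd : ¬ p ∣ m / p ^ k := Nat.not_dvd_ordCompl hp hm0
  have hkn : k < n := by
    by_contra h
    push_neg at h
    have h1 : p ^ n ≤ p ^ k := Nat.pow_le_pow_right hp.pos h
    have h2 : p ^ k ≤ m := Nat.le_of_dvd (Nat.pos_of_ne_zero hm0) hdvd
    have h3 : m < p ^ n := ZMod.val_lt c
    omega
  have hcop : Nat.Coprime (m / p ^ k) (p ^ n) :=
    (Nat.Prime.coprime_iff_not_dvd hp |>.mpr hnd).symm.pow_right n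
  set u := ZMod.unitOfCoprime _ hcop with hu
  refine ⟨(↑u⁻¹ : ZMod (p ^ n)) * (p : ZMod (p ^ n)) ^ (n - 1 - k), ?_⟩
  have hmc : ((m : ZMod (p ^ n))) = c := by simp [hm, ZMod.natCast_val, ZMod.cast_id]
  have hmfac : ((p ^ k * (m / p ^ k) : ℕ) : ZMod (p ^ n)) = c := by
    rw [Nat.ordProj_mul_ordCompl_eq_self m p]; exact hmc
  have huv : (u : ZMod (p ^ n)) = ((m / p ^ k : ℕ) : ZMod (p ^ n)) := rfl
  calc c * ((↑u⁻¹ : ZMod (p ^ n)) * (p : ZMod (p ^ n)) ^ (n - 1 - k))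
      = ((p : ZMod (p ^ n)) ^ k * ((u : ZMod (p ^ n)) * (↑u⁻¹ : ZMod (p ^ n)))) *
          (p : ZMod (p ^ n)) ^ (n - 1 - k) := by
        rw [← hmfac]; push_cast [huv]; ring
    _ = (p : ZMod (p ^ n)) ^ (k + (n - 1 - k)) := by
        rw [← Units.val_mul, mul_inv_cancel]; simp [pow_add]
    _ = (p : ZMod (p ^ n)) ^ (n - 1) := by congr 1; omega

include hψ in
lemma aux_sum_char {c : ZMod (p ^ n)} (hc : c ≠ 0) :
    ∑ t : ZMod (p ^ n), ψ (c * t) = 0 := by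
  classical
  have h1 : ψ.mulShift c ≠ 1 := by
    obtain ⟨d, hd⟩ := aux_exists_mul hc
    intro h
    apply hψ
    rw [← hd, ← AddChar.mulShift_apply, h, AddChar.one_apply]
  have : ∑ t, ψ.mulShift c t = 0 := by
    rw [AddChar.sum_eq_ite]
    simp only [show (0 : AddChar (ZMod (p ^ n)) ℂ) = 1 from rfl, if_neg h1]
  simpa using this

include hψ in
lemma aux_sum_char_ite (c : ZMod (p ^ n)) :
    ∑ t : ZMod (p ^ n), ψ (c * t) = if c = 0 then ((p : ℂ) ^ n) else 0 := by
  split_ifs with h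
  · simp [h, ZMod.card]
  · exact aux_sum_char ψ hψ h

include hψ in
/-- The key two-variable sum. -/
lemma aux_two_var (u : (ZMod (p ^ n))ˣ) (a₁ a₂ : ZMod (p ^ n)) :
    ∑ s : ZMod (p ^ n), ∑ t : ZMod (p ^ n),
      ψ ((u : ZMod (p ^ n)) * s * t + a₁ * s + a₂ * t) =
      (p : ℂ) ^ n * ψ (-(((u⁻¹ : (ZMod (p ^ n))ˣ) : ZMod (p ^ n)) * a₁ * a₂)) := by
  classical
  have key : ∀ s : ZMod (p ^ n),
      ∑ t : ZMod (p ^ n), ψ ((u : ZMod (p ^ n)) * s * t + a₁ * s + a₂ * t) =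
      ψ (a₁ * s) * if ((u : ZMod (p ^ n)) * s + a₂) = 0 then ((p : ℂ) ^ n) else 0 := by
    intro s
    rw [← aux_sum_char_ite ψ hψ, Finset.mul_sum]
    refine Finset.sum_congr rfl fun t _ => ?_
    rw [← AddChar.map_add_eq_mul]
    ring_nf
  simp only [key]
  have hcoll : ∀ s : ZMod (p ^ n), ((u : ZMod (p ^ n)) * s + a₂ = 0) ↔
      s = -(((u⁻¹ : (ZMod (p ^ n))ˣ) : ZMod (p ^ n)) * a₂) := by
    intro s
    constructor
    · intro h
      have := congrArg (fun z => ((u⁻¹ : (ZMod (p ^ n))ˣ) : ZMod (p ^ n)) * z) h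
      simp only [mul_add, ← mul_assoc] at this
      rw [show ((u⁻¹ : (ZMod (p ^ n))ˣ) : ZMod (p ^ n)) * (u : ZMod (p ^ n)) = 1 by
        rw [← Units.val_mul, inv_mul_cancel, Units.val_one]] at this
      simp at this
      linear_combination this
    · intro h
      subst h
      rw [show ((u : ZMod (p ^ n))) * -(((u⁻¹ : (ZMod (p ^ n))ˣ) : ZMod (p ^ n)) * a₂)
        = -(((u : ZMod (p ^ n)) * ((u⁻¹ : (ZMod (p ^ n))ˣ) : ZMod (p ^ n))) * a₂) by ring,
        ← Units.val_mul, mul_inv_cancel, Units.val_one]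
      ring
  simp only [hcoll, mul_ite, mul_zero]
  rw [Finset.sum_ite_eq' Finset.univ, if_pos (Finset.mem_univ _)]
  rw [mul_comm]
  congr 1
  congr 1
  ring

end Aux

/-- Twisted Gauss sum over `ℤ/pⁿ` (`p` odd): with `P(b,(T,t₁,t₂)) = b det T - t₁t₂` and
`⟨(B,y₁,y₂),(T,t₁,t₂)⟩ = tr(BT) + y₁t₁ + y₂t₂`,
`∑_v ψ(x P(b,v) + ⟨α,v⟩) = p^{3n} ψ(-x⁻¹ P(b⁻¹,α))`. -/
theorem twisted_gauss_sum_zmod (p : ℕ) [Fact p.Prime] (hp : p ≠ 2) (n : ℕ) (hn : 1 ≤ n)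
    [NeZero (p ^ n)] (ψ : AddChar (ZMod (p ^ n)) ℂ)
    (hψ : ψ ((p : ZMod (p ^ n)) ^ (n - 1)) ≠ 1) (b x : (ZMod (p ^ n))ˣ)
    (B : Matrix (Fin 2) (Fin 2) (ZMod (p ^ n))) (y₁ y₂ : ZMod (p ^ n)) :
    ∑ T : Matrix (Fin 2) (Fin 2) (ZMod (p ^ n)), ∑ t₁ : ZMod (p ^ n), ∑ t₂ : ZMod (p ^ n),
        ψ ((x : ZMod (p ^ n)) * ((b : ZMod (p ^ n)) * T.det - t₁ * t₂) +
          ((B * T).trace + y₁ * t₁ + y₂ * t₂)) =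
      (p : ℂ) ^ (3 * n) *
        ψ (-(((x⁻¹ : (ZMod (p ^ n))ˣ) : ZMod (p ^ n)) *
          (((b⁻¹ : (ZMod (p ^ n))ˣ) : ZMod (p ^ n)) * B.det - y₁ * y₂))) := by
  classical
  -- step 1: split off the (t₁,t₂) part
  have step1 : ∀ T : Matrix (Fin 2) (Fin 2) (ZMod (p ^ n)),
      ∑ t₁ : ZMod (p ^ n), ∑ t₂ : ZMod (p ^ n),
        ψ ((x : ZMod (p ^ n)) * ((b : ZMod (p ^ n)) * T.det - t₁ * t₂) + ((B * T).trace + y₁ * t₁ + y₂ * t₂)) =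
      ψ ((x : ZMod (p ^ n)) * (b : ZMod (p ^ n)) * T.det + (B * T).trace) *
        ∑ t₁ : ZMod (p ^ n), ∑ t₂ : ZMod (p ^ n), ψ (((-x : (ZMod (p ^ n))ˣ) : ZMod (p ^ n)) * t₁ * t₂ + y₁ * t₁ + y₂ * t₂) := by
    intro T
    rw [Finset.mul_sum]
    refine Finset.sum_congr rfl fun t₁ _ => ?_
    rw [Finset.mul_sum]
    refine Finset.sum_congr rfl fun t₂ _ => ?_
    rw [← AddChar.map_add_eq_mul]
    congr 1
    rw [Units.val_neg]
    ring
  rw [Finset.sum_congr rfl fun T _ => step1 T]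
  rw [← Finset.sum_mul, aux_two_var ψ hψ (-x) y₁ y₂]
  -- step 2: the matrix sum
  let e : ((ZMod (p ^ n) × ZMod (p ^ n)) × (ZMod (p ^ n) × ZMod (p ^ n))) ≃ Matrix (Fin 2) (Fin 2) (ZMod (p ^ n)) :=
    { toFun := fun q => !![q.1.1, q.1.2; q.2.1, q.2.2]
      invFun := fun T => ((T 0 0, T 0 1), (T 1 0, T 1 1))
      left_inv := fun q => by simp
      right_inv := fun T => (Matrix.eta_fin_two T).symm }
  have step2 : ∑ T : Matrix (Fin 2) (Fin 2) (ZMod (p ^ n)), ψ ((x : ZMod (p ^ n)) * (b : ZMod (p ^ n)) * T.det + (B * T).trace) =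
      (∑ s : ZMod (p ^ n), ∑ t : ZMod (p ^ n), ψ (((x * b : (ZMod (p ^ n))ˣ) : ZMod (p ^ n)) * s * t + B 0 0 * s + B 1 1 * t)) *
      (∑ s : ZMod (p ^ n), ∑ t : ZMod (p ^ n), ψ (((-(x * b) : (ZMod (p ^ n))ˣ) : ZMod (p ^ n)) * s * t + B 1 0 * s + B 0 1 * t)) := by
    rw [← Fintype.sum_equiv e
      (fun q => ψ ((x : ZMod (p ^ n)) * (b : ZMod (p ^ n)) * (e q).det + (B * e q).trace)) _ (fun q => rfl)]
    have expand : ∀ q : (ZMod (p ^ n) × ZMod (p ^ n)) × (ZMod (p ^ n) × ZMod (p ^ n)),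
        ψ ((x : ZMod (p ^ n)) * (b : ZMod (p ^ n)) * (e q).det + (B * e q).trace) =
        ψ (((x * b : (ZMod (p ^ n))ˣ) : ZMod (p ^ n)) * q.1.1 * q.2.2 + B 0 0 * q.1.1 + B 1 1 * q.2.2) *
        ψ (((-(x * b) : (ZMod (p ^ n))ˣ) : ZMod (p ^ n)) * q.1.2 * q.2.1 + B 1 0 * q.1.2 + B 0 1 * q.2.1) := by
      intro q
      rw [← AddChar.map_add_eq_mul]
      congr 1
      show (x : ZMod (p ^ n)) * (b : ZMod (p ^ n)) * (!![q.1.1, q.1.2; q.2.1, q.2.2]).det +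
        (B * !![q.1.1, q.1.2; q.2.1, q.2.2]).trace = _
      rw [Matrix.det_fin_two_of, Matrix.trace_fin_two]
      simp [Matrix.mul_apply, Fin.sum_univ_two, Units.val_neg, Units.val_mul]
      ring
    simp only [expand]
    rw [Fintype.sum_prod_type]
    simp only [Fintype.sum_prod_type]
    rw [Finset.sum_mul_sum]
    refine Finset.sum_congr rfl fun a _ => ?_
    refine Finset.sum_congr rfl fun c _ => ?_
    rw [Finset.sum_mul_sum]
    exact Finset.sum_comm ..
  rw [step2, aux_two_var ψ hψ (x * b) (B 0 0) (B 1 1),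
    aux_two_var ψ hψ (-(x * b)) (B 1 0) (B 0 1)]
  have hψ3 : ∀ A C D : ZMod (p ^ n),
      ((p : ℂ) ^ n * ψ A) * ((p : ℂ) ^ n * ψ C) * ((p : ℂ) ^ n * ψ D) =
      (p : ℂ) ^ (3 * n) * ψ (A + C + D) := by
    intro A C D
    rw [AddChar.map_add_eq_mul, AddChar.map_add_eq_mul, show 3 * n = n + n + n by ring,
      pow_add, pow_add]
    ring
  rw [hψ3]
  congr 1
  rw [Matrix.det_fin_two]
  simp only [mul_inv, inv_neg, Units.val_mul, Units.val_neg]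
  ring
end

section
/- With the notation of the previous statement (odd residue characteristic, $\psi$ of conductor $\mathcal{O}$, $b \in \mathcal{O}^\times$), let $x \in \mathcal{O}^\times$, let $\alpha = (B, y_1, y_2) \in M_2(K) \times K \times K$, and let $\langle \alpha, v\rangle = \mathrm{tr}(BT) + y_1 t_1 + y_2 t_2$. Then for each nonzero $t \in \mathcal{O}$, the integral $\int_{M_2(\mathcal{O}) \times \mathcal{O}^2} \psi\big((x P(b,v) + \langle \alpha, v\rangle)/t\big)\, dv$ vanishes unless $\alpha \in M_2(\mathcal{O}) \times \mathcal{O}^2$, in which case it equals $|t|^3 \, \psi\big(-P(b^{-1},\alpha)/(x t)\big)$, where $P(b^{-1}, \alpha) = b^{-1} \det B - y_1 y_2$. -/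
/-!
The form `x·P(b, v)` is the orthogonal sum of three hyperbolic planes `c·u·w`, on the coordinate
pairs `(v₀, v₃)`, `(v₁, v₂)`, `(v₄, v₅)` with `‖c‖ = 1`, so the integral factors into three
integrals of `ψ((c u w + a u + d w)/t)` over `ℤ_p²`. Integrating in `w` first, orthogonality of
`ψ` on `ℤ_p` cuts the `u`-integral down to the ball `‖u + d/c‖ ≤ ‖t‖`, which misses `ℤ_p` unless
`d` is integral. On that ball `u ↦ ψ(a u / t)` is the constant `ψ(-ad/(ct))` when `a` is integral,
and otherwise a translation of the ball by a vector of norm `≤ ‖t‖` rescales the integral by some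
`ψ(x₀) ≠ 1`, so it vanishes. A ball of radius `‖t‖ = p⁻ⁿ` is one of `pⁿ` disjoint translates
tiling `ℤ_p`, so it has measure `‖t‖`; this gives one factor `‖t‖` per plane.
-/

open MeasureTheory Metric Filter Topology

theorem AddChar.continuous_of_forall_mem_eq_one {G M : Type*} [AddGroup G] [TopologicalSpace G]
    [IsTopologicalAddGroup G] [Monoid M] [TopologicalSpace M] (ψ : AddChar G M) {U : Set G}
    (hU : U ∈ 𝓝 (0 : G)) (hψ : ∀ x ∈ U, ψ x = 1) : Continuous ψ := by
  refine continuous_iff_continuousAt.2 fun x => EventuallyEq.continuousAt (y := ψ x) ?_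
  have hshift : Tendsto (fun y => -x + y) (𝓝 x) (𝓝 0) := by
    simpa using (tendsto_const_nhds (x := -x)).add (tendsto_id (x := 𝓝 x))
  filter_upwards [hshift hU] with y hy
  rw [← add_neg_cancel_left x y, AddChar.map_add_eq_mul, hψ _ hy, mul_one]

theorem setIntegral_addChar_eq_zero {G : Type*} [AddGroup G] [MeasurableSpace G]
    [MeasurableAdd G] (μ : Measure G) [μ.IsAddRightInvariant] (ψ : AddChar G ℂ) {S : Set G}
    {a : G} (hS : (· + a) ⁻¹' S = S) (ha : ψ a ≠ 1) : ∫ x in S, ψ x ∂μ = 0 := by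
  have h := (measurePreserving_add_right μ a).setIntegral_preimage_emb
    (measurableEmbedding_addRight a) ψ S
  simp only [hS, AddChar.map_add_eq_mul, integral_mul_const] at h
  have : (∫ x in S, ψ x ∂μ) * (ψ a - 1) = 0 := by linear_combination h
  exact (mul_eq_zero.1 this).resolve_right (sub_ne_zero.2 ha)

theorem IsUltrametricDist.closedBall_inter_closedBall_of_le {X : Type*} [PseudoMetricSpace X]
    [IsUltrametricDist X] {x y : X} {r s : ℝ} (hrs : r ≤ s) :
    closedBall y r ∩ closedBall x s = if dist y x ≤ s then closedBall y r else ∅ := by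
  split_ifs with hy
  · rw [Set.inter_eq_left, closedBall_eq_of_mem hy]
    exact closedBall_subset_closedBall hrs
  · refine Set.eq_empty_of_forall_notMem fun w ⟨hw, hwx⟩ => hy ?_
    rw [← mem_closedBall, closedBall_eq_of_mem hwx]
    exact closedBall_subset_closedBall hrs (mem_closedBall_comm.1 hw)

noncomputable def hyperbolicPhase {K : Type*} [Field K] (ψ : AddChar K ℂ) (t c a d : K)
    (z : K × K) : ℂ :=
  ψ ((c * z.1 * z.2 + a * z.1 + d * z.2) / t)

/-- The coordinate pairs `(v₀, v₃)`, `(v₁, v₂)`, `(v₄, v₅)` span the three hyperbolic planes of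
`b (v₀ v₃ - v₁ v₂) - v₄ v₅`. -/
def finSixOfPairs {α : Type*} (z : (α × α) × (α × α) × (α × α)) : Fin 6 → α :=
  ![z.1.1, z.2.1.1, z.2.1.2, z.1.2, z.2.2.1, z.2.2.2]

theorem addChar_finSixOfPairs {K : Type*} [Field K] (ψ : AddChar K ℂ) (b x t : K) (α : Fin 6 → K)
    (z : (K × K) × (K × K) × (K × K)) :
    ψ ((x * (b * (finSixOfPairs z 0 * finSixOfPairs z 3 - finSixOfPairs z 1 * finSixOfPairs z 2)
        - finSixOfPairs z 4 * finSixOfPairs z 5) + ∑ i, α i * finSixOfPairs z i) / t) =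
      hyperbolicPhase ψ t (x * b) (α 0) (α 3) z.1 *
        (hyperbolicPhase ψ t (-(x * b)) (α 1) (α 2) z.2.1 *
          hyperbolicPhase ψ t (-x) (α 4) (α 5) z.2.2) := by
  simp only [hyperbolicPhase, ← AddChar.map_add_eq_mul, finSixOfPairs, Fin.sum_univ_six]
  congr 1
  simp only [Fin.isValue, Matrix.cons_val]
  ring

theorem measurable_finSixOfPairs {α : Type*} [MeasurableSpace α] :
    Measurable (finSixOfPairs (α := α)) := by
  rw [measurable_pi_iff]
  intro i
  fin_cases i
  exacts [measurable_fst.fst, measurable_snd.fst.fst, measurable_snd.fst.snd,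
    measurable_fst.snd, measurable_snd.snd.fst, measurable_snd.snd.snd]

theorem measurePreserving_finSixOfPairs {α : Type*} [MeasurableSpace α] (ν : Measure α)
    [SigmaFinite ν] :
    MeasurePreserving finSixOfPairs ((ν.prod ν).prod ((ν.prod ν).prod (ν.prod ν)))
      (Measure.pi fun _ : Fin 6 => ν) := by
  refine ⟨measurable_finSixOfPairs, (Measure.pi_eq fun s hs => ?_).symm⟩
  have hpre : finSixOfPairs ⁻¹' Set.univ.pi s =
      (s 0 ×ˢ s 3) ×ˢ (s 1 ×ˢ s 2) ×ˢ (s 4 ×ˢ s 5) := by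
    ext z
    simp only [Set.mem_preimage, Set.mem_univ_pi, Set.mem_prod, Fin.forall_fin_succ,
      finSixOfPairs, Fin.isValue, Matrix.cons_val_zero, Fin.succ_zero_eq_one, Fin.succ_one_eq_two,
      Fin.reduceSucc, Matrix.cons_val_succ, Matrix.cons_val_fin_one, IsEmpty.forall_iff, and_true]
    tauto
  rw [Measure.map_apply measurable_finSixOfPairs (MeasurableSet.univ_pi hs), hpre]
  simp only [Measure.prod_prod, Fin.prod_univ_six]
  ring

theorem integral_finSixOfPairs {α E : Type*} [MeasurableSpace α] [NormedAddCommGroup E]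
    [NormedSpace ℝ E] (ν : Measure α) [SigmaFinite ν] {f : (Fin 6 → α) → E}
    (hf : AEStronglyMeasurable f (Measure.pi fun _ : Fin 6 => ν)) :
    ∫ v, f v ∂(Measure.pi fun _ : Fin 6 => ν) =
      ∫ z, f (finSixOfPairs z) ∂((ν.prod ν).prod ((ν.prod ν).prod (ν.prod ν))) := by
  rw [← (measurePreserving_finSixOfPairs ν).map_eq,
    integral_map measurable_finSixOfPairs.aemeasurable]
  rwa [(measurePreserving_finSixOfPairs ν).map_eq]

namespace Padic

variable {p : ℕ} [Fact p.Prime]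

theorem natCast_le_norm_of_one_lt_norm {y : ℚ_[p]} (h : 1 < ‖y‖) : (p : ℝ) ≤ ‖y‖ := by
  simpa using (norm_le_pow_iff_norm_lt_pow_add_one y 0).not.1 (by simpa using h)

theorem exists_norm_eq_pow_neg {t : ℚ_[p]} (ht : t ≠ 0) (ht1 : ‖t‖ ≤ 1) :
    ∃ n : ℕ, ‖t‖ = (p : ℝ) ^ (-(n : ℤ)) :=
  ⟨t.valuation.toNat, by
    rw [norm_eq_zpow_neg_valuation ht,
      Int.toNat_of_nonneg ((norm_le_one_iff_val_nonneg t).1 ht1)]⟩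

theorem iUnion_closedBall_natCast (n : ℕ) :
    ⋃ j : Fin (p ^ n), closedBall (j : ℚ_[p]) ((p : ℝ) ^ (-(n : ℤ))) = closedBall 0 1 := by
  ext x
  simp only [Set.mem_iUnion, mem_closedBall, dist_eq_norm, sub_zero]
  constructor
  · rintro ⟨j, hj⟩
    have hr : (p : ℝ) ^ (-(n : ℤ)) ≤ 1 :=
      zpow_le_one_of_nonpos₀ (by exact_mod_cast (Fact.out : p.Prime).one_lt.le) (by omega)
    calc ‖x‖ = ‖(x - j) + j‖ := by rw [sub_add_cancel]
      _ ≤ max ‖x - j‖ ‖(j : ℚ_[p])‖ := nonarchimedean _ _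
      _ ≤ 1 := max_le (hj.trans hr) (by simpa using norm_int_le_one (p := p) j)
  · intro hx
    set y : ℤ_[p] := ⟨x, hx⟩
    refine ⟨⟨y.appr n, y.appr_lt n⟩, ?_⟩
    have := (PadicInt.norm_le_pow_iff_mem_span_pow _ n).2 (y.appr_spec n)
    rw [PadicInt.norm_def] at this
    push_cast at this
    exact this

theorem pairwise_disjoint_closedBall_natCast (n : ℕ) :
    Pairwise (Function.onFun Disjoint
      fun j : Fin (p ^ n) => closedBall (j : ℚ_[p]) ((p : ℝ) ^ (-(n : ℤ)))) := by
  intro j k hjk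
  refine (IsUltrametricDist.closedBall_eq_or_disjoint _ _ _).resolve_left fun heq => hjk ?_
  have hk : (k : ℚ_[p]) ∈ closedBall (j : ℚ_[p]) ((p : ℝ) ^ (-(n : ℤ))) := by
    rw [heq]
    exact mem_closedBall_self (by positivity)
  rw [mem_closedBall, dist_eq_norm] at hk
  have hdvd : ((p ^ n : ℕ) : ℤ) ∣ (k : ℤ) - j := by
    exact_mod_cast (norm_int_le_pow_iff_dvd ((k : ℤ) - j) n).1 (by simpa using hk)
  have := Int.eq_zero_of_abs_lt_dvd hdvd (by rw [abs_lt]; omega)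
  omega

theorem continuous_addChar {ψ : AddChar ℚ_[p] ℂ} (hψ₁ : ∀ x : ℚ_[p], ‖x‖ ≤ 1 → ψ x = 1) :
    Continuous ψ :=
  ψ.continuous_of_forall_mem_eq_one (closedBall_mem_nhds 0 one_pos)
    fun x hx => hψ₁ x (by simpa using hx)

variable [MeasurableSpace ℚ_[p]] [BorelSpace ℚ_[p]] (μ : Measure ℚ_[p])

theorem pow_mul_measure_closedBall [μ.IsAddHaarMeasure] (n : ℕ) (c : ℚ_[p]) :
    (p ^ n : ENNReal) * μ (closedBall c ((p : ℝ) ^ (-(n : ℤ)))) = μ (closedBall 0 1) := by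
  rw [← iUnion_closedBall_natCast n,
    measure_iUnion (pairwise_disjoint_closedBall_natCast n) fun _ => measurableSet_closedBall,
    tsum_fintype]
  simp [Measure.addHaar_closedBall_center μ _, Finset.sum_const]

theorem measureReal_closedBall_norm [μ.IsAddHaarMeasure] (hμ : μ (closedBall 0 1) = 1)
    (c : ℚ_[p]) {t : ℚ_[p]} (ht : t ≠ 0) (ht1 : ‖t‖ ≤ 1) : μ.real (closedBall c ‖t‖) = ‖t‖ := by
  obtain ⟨n, hn⟩ := exists_norm_eq_pow_neg ht ht1
  have h := pow_mul_measure_closedBall μ n c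
  rw [hμ, ← hn, mul_comm] at h
  rw [Measure.real, ENNReal.eq_inv_of_mul_eq_one_left h, hn]
  simp [ENNReal.toReal_inv]

theorem setIntegral_closedBall_addChar [μ.IsAddRightInvariant] {ψ : AddChar ℚ_[p] ℂ}
    (hψ₁ : ∀ x : ℚ_[p], ‖x‖ ≤ 1 → ψ x = 1) (hψ₂ : ∃ x : ℚ_[p], ‖x‖ ≤ p ∧ ψ x ≠ 1)
    (c z t : ℚ_[p]) :
    ∫ w in closedBall c ‖t‖, ψ (z * w) ∂μ =
      if ‖z * t‖ ≤ 1 then μ.real (closedBall c ‖t‖) • ψ (z * c) else 0 := by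
  split_ifs with hzt
  · refine (setIntegral_congr_fun measurableSet_closedBall fun w hw => ?_).trans
      (setIntegral_const _)
    rw [mem_closedBall, dist_eq_norm] at hw
    have : ‖z * (w - c)‖ ≤ 1 := by
      rw [norm_mul] at hzt ⊢
      exact (mul_le_mul_of_nonneg_left hw (norm_nonneg z)).trans hzt
    rw [show z * w = z * c + z * (w - c) by ring, AddChar.map_add_eq_mul, hψ₁ _ this, mul_one]
  · obtain ⟨x₀, hx₀p, hx₀⟩ := hψ₂
    have hz : z ≠ 0 := by rintro rfl; simp at hzt
    have hshift : ‖x₀ / z‖ ≤ ‖t‖ := by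
      rw [norm_div, div_le_iff₀ (norm_pos_iff.2 hz), mul_comm, ← norm_mul]
      exact hx₀p.trans (natCast_le_norm_of_one_lt_norm (not_le.1 hzt))
    refine setIntegral_addChar_eq_zero μ (ψ.compAddMonoidHom (AddMonoidHom.mulLeft z))
      (a := x₀ / z) ?_ (by simpa [mul_div_cancel₀ _ hz] using hx₀)
    rw [Metric.preimage_add_right_closedBall]
    exact (IsUltrametricDist.closedBall_eq_of_mem (by simpa using hshift)).symm

theorem setIntegral_closedBall_one_addChar [μ.IsAddRightInvariant] (hμ : μ (closedBall 0 1) = 1)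
    {ψ : AddChar ℚ_[p] ℂ} (hψ₁ : ∀ x : ℚ_[p], ‖x‖ ≤ 1 → ψ x = 1)
    (hψ₂ : ∃ x : ℚ_[p], ‖x‖ ≤ p ∧ ψ x ≠ 1) (z : ℚ_[p]) :
    ∫ w in closedBall 0 1, ψ (z * w) ∂μ = if ‖z‖ ≤ 1 then 1 else 0 := by
  simpa [Measure.real, hμ] using setIntegral_closedBall_addChar μ hψ₁ hψ₂ 0 z 1

theorem setIntegral_closedBall_one_hyperbolicPhase [μ.IsAddRightInvariant]
    (hμ : μ (closedBall 0 1) = 1) {ψ : AddChar ℚ_[p] ℂ} (hψ₁ : ∀ x : ℚ_[p], ‖x‖ ≤ 1 → ψ x = 1)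
    (hψ₂ : ∃ x : ℚ_[p], ‖x‖ ≤ p ∧ ψ x ≠ 1) {c t : ℚ_[p]} (hc : ‖c‖ = 1) (ht : t ≠ 0)
    (a d u : ℚ_[p]) :
    ∫ w in closedBall 0 1, hyperbolicPhase ψ t c a d (u, w) ∂μ =
      (closedBall (-d / c) ‖t‖).indicator (fun u => ψ (a / t * u)) u := by
  have hc0 : c ≠ 0 := norm_ne_zero_iff.1 (by rw [hc]; exact one_ne_zero)
  have hsplit (w : ℚ_[p]) :
      hyperbolicPhase ψ t c a d (u, w) = ψ ((c * u + d) / t * w) * ψ (a / t * u) := by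
    rw [hyperbolicPhase, ← AddChar.map_add_eq_mul]
    congr 1
    ring
  have hmem : ‖(c * u + d) / t‖ ≤ 1 ↔ u ∈ closedBall (-d / c) ‖t‖ := by
    rw [mem_closedBall, dist_eq_norm, norm_div, div_le_one (norm_pos_iff.2 ht),
      show c * u + d = c * (u - -d / c) by field_simp; ring, norm_mul, hc, one_mul]
  simp_rw [hsplit, integral_mul_const, setIntegral_closedBall_one_addChar μ hμ hψ₁ hψ₂]
  by_cases hu : u ∈ closedBall (-d / c) ‖t‖
  · rw [if_pos (hmem.2 hu), Set.indicator_of_mem hu, one_mul]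
  · rw [if_neg (mt hmem.1 hu), Set.indicator_of_notMem hu, zero_mul]

theorem integral_hyperbolicPhase [μ.IsAddHaarMeasure] (hμ : μ (closedBall 0 1) = 1)
    {ψ : AddChar ℚ_[p] ℂ} (hψ₁ : ∀ x : ℚ_[p], ‖x‖ ≤ 1 → ψ x = 1)
    (hψ₂ : ∃ x : ℚ_[p], ‖x‖ ≤ p ∧ ψ x ≠ 1)
    {c t : ℚ_[p]} (hc : ‖c‖ = 1) (ht : t ≠ 0) (ht1 : ‖t‖ ≤ 1) (a d : ℚ_[p]) :
    ∫ z, hyperbolicPhase ψ t c a d z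
        ∂((μ.restrict (closedBall 0 1)).prod (μ.restrict (closedBall 0 1))) =
      if ‖a‖ ≤ 1 ∧ ‖d‖ ≤ 1 then (‖t‖ : ℂ) * ψ (-(a * d) / (c * t)) else 0 := by
  have hint : Integrable (hyperbolicPhase ψ t c a d)
      ((μ.restrict (closedBall 0 1)).prod (μ.restrict (closedBall 0 1))) := by
    have := continuous_addChar hψ₁
    rw [Measure.prod_restrict]
    exact ContinuousOn.integrableOn_compact
      ((isCompact_closedBall 0 1).prod (isCompact_closedBall 0 1))
      (by unfold hyperbolicPhase; fun_prop)
  rw [integral_prod _ hint]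
  simp_rw [setIntegral_closedBall_one_hyperbolicPhase μ hμ hψ₁ hψ₂ hc ht]
  rw [integral_indicator measurableSet_closedBall,
    Measure.restrict_restrict measurableSet_closedBall,
    IsUltrametricDist.closedBall_inter_closedBall_of_le ht1]
  have hcenter : dist (-d / c) 0 ≤ 1 ↔ ‖d‖ ≤ 1 := by simp [norm_div, hc]
  by_cases hd : ‖d‖ ≤ 1
  · rw [if_pos (hcenter.2 hd), setIntegral_closedBall_addChar μ hψ₁ hψ₂,
      measureReal_closedBall_norm μ hμ _ ht ht1, div_mul_cancel₀ _ ht]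
    by_cases ha : ‖a‖ ≤ 1
    · simp only [ha, hd, and_self, if_true, Complex.real_smul]
      congr 2
      field_simp
    · simp [ha]
  · rw [if_neg (mt hcenter.1 hd), Measure.restrict_empty, integral_zero_measure]
    simp [hd]

end Padic

open Padic in
theorem twisted_gaussian_integral_padic_general (p : ℕ) [Fact p.Prime]
    [MeasurableSpace ℚ_[p]] [BorelSpace ℚ_[p]]
    (μ : Measure ℚ_[p]) [μ.IsAddHaarMeasure]
    (hμ : μ {x : ℚ_[p] | ‖x‖ ≤ 1} = 1)
    (ψ : AddChar ℚ_[p] ℂ) (hψ₁ : ∀ x : ℚ_[p], ‖x‖ ≤ 1 → ψ x = 1)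
    (hψ₂ : ∃ x : ℚ_[p], ‖x‖ ≤ p ∧ ψ x ≠ 1)
    (b x : ℚ_[p]) (hb : ‖b‖ = 1) (hx : ‖x‖ = 1)
    (α : Fin 6 → ℚ_[p]) (t : ℚ_[p]) (ht : t ≠ 0) (ht1 : ‖t‖ ≤ 1) :
    ∫ v in {v : Fin 6 → ℚ_[p] | ∀ i, ‖v i‖ ≤ 1},
        ψ ((x * (b * (v 0 * v 3 - v 1 * v 2) - v 4 * v 5) + ∑ i, α i * v i) / t)
        ∂(Measure.pi fun _ : Fin 6 => μ) =
      if ∀ i, ‖α i‖ ≤ 1 then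
        ((‖t‖ : ℂ)) ^ 3 * ψ (-((b⁻¹ * (α 0 * α 3 - α 1 * α 2) - α 4 * α 5) / (x * t)))
      else 0 := by
  have hψc := continuous_addChar hψ₁
  rw [show {x : ℚ_[p] | ‖x‖ ≤ 1} = closedBall 0 1 by ext; simp] at hμ
  rw [show {v : Fin 6 → ℚ_[p] | ∀ i, ‖v i‖ ≤ 1} = Set.univ.pi fun _ => closedBall 0 1 by
      ext; simp,
    Measure.restrict_pi_pi,
    integral_finSixOfPairs _ (Continuous.aestronglyMeasurable (by fun_prop))]
  simp only [addChar_finSixOfPairs]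
  rw [integral_prod_mul (hyperbolicPhase ψ t (x * b) (α 0) (α 3))
      fun w : (ℚ_[p] × ℚ_[p]) × (ℚ_[p] × ℚ_[p]) =>
        hyperbolicPhase ψ t (-(x * b)) (α 1) (α 2) w.1 * hyperbolicPhase ψ t (-x) (α 4) (α 5) w.2,
    integral_prod_mul,
    integral_hyperbolicPhase μ hμ hψ₁ hψ₂ (by rw [norm_mul, hx, hb, one_mul]) ht ht1,
    integral_hyperbolicPhase μ hμ hψ₁ hψ₂ (by rw [norm_neg, norm_mul, hx, hb, one_mul]) ht ht1,
    integral_hyperbolicPhase μ hμ hψ₁ hψ₂ (by rw [norm_neg, hx]) ht ht1]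
  by_cases hα : ∀ i, ‖α i‖ ≤ 1
  · have hx0 : x ≠ 0 := norm_ne_zero_iff.1 (by rw [hx]; exact one_ne_zero)
    have hb0 : b ≠ 0 := norm_ne_zero_iff.1 (by rw [hb]; exact one_ne_zero)
    have hphase : -((b⁻¹ * (α 0 * α 3 - α 1 * α 2) - α 4 * α 5) / (x * t)) =
        -(α 0 * α 3) / (x * b * t) + -(α 1 * α 2) / (-(x * b) * t) + -(α 4 * α 5) / (-x * t) := by
      field_simp
      ring
    rw [if_pos hα, if_pos ⟨hα 0, hα 3⟩, if_pos ⟨hα 1, hα 2⟩, if_pos ⟨hα 4, hα 5⟩, hphase,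
      AddChar.map_add_eq_mul, AddChar.map_add_eq_mul]
    ring
  · rw [if_neg hα]
    split_ifs <;> try simp only [zero_mul, mul_zero]
    exact (hα fun i => by fin_cases i <;> simp [*]).elim

/-- Lemma 4.2 of the paper (the twisted Gaussian integral): over `ℚ_p` with `p` odd, with
`ψ` of conductor `ℤ_p`, `b, x` units, `P(b,v) = b(v₀v₃ - v₁v₂) - v₄v₅` and
`⟨α,v⟩ = ∑ αᵢvᵢ`, the integral `∫_{ℤ_p⁶} ψ((x P(b,v) + ⟨α,v⟩)/t) dv` vanishes unless
`α ∈ ℤ_p⁶`, in which case it equals `|t|³ ψ(-P(b⁻¹,α)/(xt))`. -/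
theorem twisted_gaussian_integral_padic (p : ℕ) [Fact p.Prime] (hp : p ≠ 2)
    [MeasurableSpace ℚ_[p]] [BorelSpace ℚ_[p]]
    (μ : Measure ℚ_[p]) [μ.IsAddHaarMeasure] [SigmaFinite μ]
    (hμ : μ {x : ℚ_[p] | ‖x‖ ≤ 1} = 1)
    (ψ : AddChar ℚ_[p] ℂ) (hψ₁ : ∀ x : ℚ_[p], ‖x‖ ≤ 1 → ψ x = 1)
    (hψ₂ : ∃ x : ℚ_[p], ‖x‖ ≤ p ∧ ψ x ≠ 1)
    (b x : ℚ_[p]) (hb : ‖b‖ = 1) (hx : ‖x‖ = 1)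
    (α : Fin 6 → ℚ_[p]) (t : ℚ_[p]) (ht : t ≠ 0) (ht1 : ‖t‖ ≤ 1) :
    ∫ v in {v : Fin 6 → ℚ_[p] | ∀ i, ‖v i‖ ≤ 1},
        ψ ((x * (b * (v 0 * v 3 - v 1 * v 2) - v 4 * v 5) + ∑ i, α i * v i) / t)
        ∂(Measure.pi fun _ : Fin 6 => μ) =
      if ∀ i, ‖α i‖ ≤ 1 then
        ((‖t‖ : ℂ)) ^ 3 * ψ (-((b⁻¹ * (α 0 * α 3 - α 1 * α 2) - α 4 * α 5) / (x * t)))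
      else 0 :=
  twisted_gaussian_integral_padic_general p μ hμ ψ hψ₁ hψ₂ b x hb hx α t ht ht1
end
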